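/- Let Φ₁ ≠ Φ₂ be quantum channels from d×d complex matrices to m×m complex matrices, let Δ = Φ₁ − Φ₂, and suppose there is a unit vector φ ∈ ℂ^d such that M(Δ) = ‖J(Δ)‖₁ · φφᴴ. Then for every density matrix σ on ℂ^d one has ‖(1_m ⊗ √σ)·J(Δ)·(1_m ⊗ √σ)‖₁ = ⟨φ, σφ⟩ · ‖J(Δ)‖₁; consequently ‖Δ‖_⋄ = ‖J(Δ)‖₁ = d·‖Δ‖_ME, the supremum defining ‖Δ‖_⋄ is attained at σ = φφᴴ, and every density matrix σ with σ ≠ φφᴴ gives a value strictly smaller than ‖Δ‖_⋄. -/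

import Mathlib

open Matrix Kronecker ComplexOrder

noncomputable section

/-- The positive semidefinite square root of a PSD matrix, as `Matrix.PosSemidef.sqrt` was
defined in the older Mathlib (removed since). -/
noncomputable def Matrix.PosSemidef.sqrt {𝕜 : Type*} [RCLike 𝕜] {n : Type*} [Fintype n]
    [DecidableEq n] {A : Matrix n n 𝕜} (hA : A.PosSemidef) : Matrix n n 𝕜 :=
  hA.1.eigenvectorUnitary.1 * diagonal ((↑) ∘ (√·) ∘ hA.1.eigenvalues) *
    (star hA.1.eigenvectorUnitary : Matrix n n 𝕜)

/-- The matrix absolute value `|A| = √(AᴴA)`. -/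
noncomputable def matAbs {n : Type*} [Fintype n] [DecidableEq n] (A : Matrix n n ℂ) :
    Matrix n n ℂ :=
  (Matrix.posSemidef_conjTranspose_mul_self A).sqrt

/-- The trace norm `‖A‖₁ = Tr √(AᴴA)`. -/
noncomputable def traceNorm {n : Type*} [Fintype n] [DecidableEq n] (A : Matrix n n ℂ) : ℝ :=
  ((matAbs A).trace).re

/-- The positive semidefinite square root of a PSD matrix (zero otherwise). -/
noncomputable def matSqrt {n : Type*} [Fintype n] [DecidableEq n] (σ : Matrix n n ℂ) :
    Matrix n n ℂ :=
  open scoped Classical in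
  if h : σ.PosSemidef then h.sqrt else 0

/-- A density matrix: positive semidefinite with unit trace. -/
def IsDensity {n : Type*} [Fintype n] [DecidableEq n] (σ : Matrix n n ℂ) : Prop :=
  σ.PosSemidef ∧ σ.trace = 1

/-- The Choi operator of a linear map between matrix algebras. -/
noncomputable def choi {d m : ℕ}
    (S : Matrix (Fin d) (Fin d) ℂ →ₗ[ℂ] Matrix (Fin m) (Fin m) ℂ) :
    Matrix (Fin m × Fin d) (Fin m × Fin d) ℂ :=
  ∑ i : Fin d, ∑ j : Fin d,
    (S (Matrix.single i j 1)) ⊗ₖ (Matrix.single i j 1)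

/-- The ME-norm `‖S‖_ME = ‖J(S)‖₁ / d`. -/
noncomputable def MENorm {d m : ℕ}
    (S : Matrix (Fin d) (Fin d) ℂ →ₗ[ℂ] Matrix (Fin m) (Fin m) ℂ) : ℝ :=
  traceNorm (choi S) / d

/-- The diamond norm: supremum over density matrices σ of
`‖(1 ⊗ √σ) J(S) (1 ⊗ √σ)‖₁`. -/
noncomputable def diamondNorm {d m : ℕ}
    (S : Matrix (Fin d) (Fin d) ℂ →ₗ[ℂ] Matrix (Fin m) (Fin m) ℂ) : ℝ :=
  ⨆ σ : {σ : Matrix (Fin d) (Fin d) ℂ // IsDensity σ},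
    traceNorm (((1 : Matrix (Fin m) (Fin m) ℂ) ⊗ₖ matSqrt σ.1) * choi S *
      ((1 : Matrix (Fin m) (Fin m) ℂ) ⊗ₖ matSqrt σ.1))

/-- The M-operator `M(S) = Tr_B |J(S)|`. -/
noncomputable def Mop {d m : ℕ}
    (S : Matrix (Fin d) (Fin d) ℂ →ₗ[ℂ] Matrix (Fin m) (Fin m) ℂ) :
    Matrix (Fin d) (Fin d) ℂ :=
  Matrix.of fun k l => ∑ b : Fin m, matAbs (choi S) (b, k) (b, l)

/-- A quantum channel: completely positive (PSD Choi operator, by Choi's theorem)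
and trace preserving. -/
def IsQChannel {d m : ℕ}
    (S : Matrix (Fin d) (Fin d) ℂ →ₗ[ℂ] Matrix (Fin m) (Fin m) ℂ) : Prop :=
  (choi S).PosSemidef ∧ ∀ ρ : Matrix (Fin d) (Fin d) ℂ, (S ρ).trace = ρ.trace

/-!
Write `J = J(Δ)` (Hermitian, as a difference of PSD Choi operators), `R = |J|` and `P = φφᴴ`.
Since `Tr (R (1 ⊗ (1 - P))) = Tr (M(Δ) (1 - P)) = 0` and `R ≥ 0`, `R = R (1 ⊗ P)`, hence also
`J = J (1 ⊗ P) = (1 ⊗ P) J`. For `X = 1 ⊗ √σ` one has `(1 ⊗ P) X² (1 ⊗ P) = ⟨φ, σφ⟩ (1 ⊗ P)`,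
so `(X R X)² = (X J X)²` and `|X J X| = X R X`, whose trace is `⟨φ, σφ⟩ ‖J‖₁`.
Finally `⟨φ, σφ⟩ = Tr (σ P) ≤ 1`, with equality only if `σ (1 - P) = 0`, i.e. `σ = P σ P = P`,
and `‖J‖₁ > 0` because `Φ₁ ≠ Φ₂`.
-/

namespace Matrix.PosSemidef

variable {n : Type*} [Fintype n] [DecidableEq n] {A B : Matrix n n ℂ}

lemma sqrt_eq_cfc (hA : A.PosSemidef) : hA.sqrt = cfc Real.sqrt A := by
  rw [hA.1.cfc_eq, IsHermitian.cfc, Unitary.conjStarAlgAut_apply]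
  rfl

open scoped MatrixOrder in
lemma posSemidef_sqrt (hA : A.PosSemidef) : hA.sqrt.PosSemidef := by
  rw [sqrt_eq_cfc]
  exact nonneg_iff_posSemidef.mp (cfc_nonneg fun x _ => Real.sqrt_nonneg x)

open scoped MatrixOrder in
lemma sqrt_mul_self (hA : A.PosSemidef) : hA.sqrt * hA.sqrt = A := by
  have hA₀ : 0 ≤ A := nonneg_iff_posSemidef.mpr hA
  rw [sqrt_eq_cfc, ← cfc_mul Real.sqrt Real.sqrt A]
  conv_rhs => rw [← cfc_id ℝ A hA.1.isSelfAdjoint]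
  exact cfc_congr fun x hx => Real.mul_self_sqrt (spectrum_nonneg_of_nonneg hA₀ hx)

open scoped MatrixOrder in
lemma sqrt_eq_of_mul_self_eq (hA : A.PosSemidef) (hB : B.PosSemidef) (h : B * B = A) :
    hA.sqrt = B := by
  subst h
  have hB₀ : 0 ≤ B := nonneg_iff_posSemidef.mpr hB
  rw [sqrt_eq_cfc, ← sq, ← cfc_pow_id (R := ℝ) B 2 hB.1.isSelfAdjoint,
    ← cfc_comp Real.sqrt (fun x : ℝ => x ^ 2) B hB.1.isSelfAdjoint]
  conv_rhs => rw [← cfc_id ℝ B hB.1.isSelfAdjoint]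
  exact cfc_congr fun x hx => Real.sqrt_sq (spectrum_nonneg_of_nonneg hB₀ hx)

lemma trace_mul_eq_trace_conjTranspose_mul_self (hA : A.PosSemidef) (hB : B.PosSemidef) :
    (A * B).trace = ((hA.sqrt * hB.sqrt)ᴴ * (hA.sqrt * hB.sqrt)).trace := by
  conv_lhs => rw [← hA.sqrt_mul_self, ← hB.sqrt_mul_self]
  rw [conjTranspose_mul, hA.posSemidef_sqrt.1.eq, hB.posSemidef_sqrt.1.eq]
  simp only [Matrix.mul_assoc]
  rw [trace_mul_comm hB.sqrt]
  simp only [Matrix.mul_assoc]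

lemma trace_mul_nonneg (hA : A.PosSemidef) (hB : B.PosSemidef) : 0 ≤ (A * B).trace := by
  rw [trace_mul_eq_trace_conjTranspose_mul_self hA hB]
  exact (posSemidef_conjTranspose_mul_self _).trace_nonneg

lemma mul_eq_zero_of_trace_mul_eq_zero (hA : A.PosSemidef) (hB : B.PosSemidef)
    (h : (A * B).trace = 0) : A * B = 0 := by
  rw [trace_mul_eq_trace_conjTranspose_mul_self hA hB,
    trace_conjTranspose_mul_self_eq_zero_iff] at h
  calc A * B = hA.sqrt * (hA.sqrt * hB.sqrt) * hB.sqrt := by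
        rw [← Matrix.mul_assoc, hA.sqrt_mul_self, Matrix.mul_assoc, hB.sqrt_mul_self]
    _ = 0 := by rw [h, mul_zero, zero_mul]

end Matrix.PosSemidef

section matAbs

variable {n : Type*} [Fintype n] [DecidableEq n] {A J K X : Matrix n n ℂ} {z : ℂ}

lemma posSemidef_matAbs (A : Matrix n n ℂ) : (matAbs A).PosSemidef :=
  (posSemidef_conjTranspose_mul_self A).posSemidef_sqrt

lemma matAbs_mul_self (A : Matrix n n ℂ) : matAbs A * matAbs A = Aᴴ * A :=
  (posSemidef_conjTranspose_mul_self A).sqrt_mul_self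

lemma matAbs_eq_of_mul_self_eq {B : Matrix n n ℂ} (hB : B.PosSemidef) (h : B * B = Aᴴ * A) :
    matAbs A = B :=
  (posSemidef_conjTranspose_mul_self A).sqrt_eq_of_mul_self_eq hB h

lemma trace_matAbs (A : Matrix n n ℂ) : (matAbs A).trace = (traceNorm A : ℂ) :=
  Complex.ext rfl (Complex.nonneg_iff.mp (posSemidef_matAbs A).trace_nonneg).2.symm

lemma traceNorm_pos (hA : A ≠ 0) : 0 < traceNorm A := by
  have hR : matAbs A ≠ 0 := fun h =>
    hA <| conjTranspose_mul_self_eq_zero.mp <| by rw [← matAbs_mul_self, h, zero_mul]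
  have htr := (posSemidef_matAbs A).trace_nonneg.lt_of_ne
    (Ne.symm (mt (posSemidef_matAbs A).trace_eq_zero_iff.mp hR))
  exact (Complex.pos_iff.mp htr).1

/-- `A` and `|A|` have the same kernel, since `Aᴴ A = |A|ᴴ |A|`. -/
lemma mul_eq_self_of_matAbs_mul_eq_self (h : matAbs A * K = matAbs A) : A * K = A := by
  have hRL : matAbs A * (1 - K) = 0 := by rw [Matrix.mul_sub, mul_one, h, sub_self]
  have hAL : (A * (1 - K))ᴴ * (A * (1 - K)) = (matAbs A * (1 - K))ᴴ * (matAbs A * (1 - K)) := by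
    simp only [conjTranspose_mul, Matrix.mul_assoc, (posSemidef_matAbs A).1.eq]
    rw [← Matrix.mul_assoc Aᴴ, ← matAbs_mul_self, Matrix.mul_assoc]
  rw [hRL, mul_zero, conjTranspose_mul_self_eq_zero, Matrix.mul_sub, mul_one, sub_eq_zero] at hAL
  exact hAL.symm

section compression

variable (hK : K.IsHermitian) (hRK : matAbs J * K = matAbs J) (hX : X.IsHermitian)
  (hXK : K * X * X * K = z • K)
include hK hRK hX hXK

/-- Both `J` and `|J|` live in the corner cut out by `K`, on which `X²` acts as the scalar `z`,
so conjugation by `X` commutes with taking the absolute value. -/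
lemma matAbs_conj_eq (hJ : J.IsHermitian) : matAbs (X * J * X) = X * matAbs J * X := by
  have sq_conj : ∀ Y : Matrix n n ℂ, Y.IsHermitian → Y * K = Y →
      X * Y * X * (X * Y * X) = z • (X * (Y * Y) * X) := by
    intro Y hY hYK
    have hKY : K * Y = Y := by
      simpa [conjTranspose_mul, hY.eq, hK.eq] using congrArg conjTranspose hYK
    calc X * Y * X * (X * Y * X) = X * (Y * K) * X * X * (K * Y) * X := by
          rw [hYK, hKY]; simp only [Matrix.mul_assoc]
      _ = X * Y * (K * X * X * K) * Y * X := by simp only [Matrix.mul_assoc]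
      _ = z • (X * (Y * K * Y) * X) := by
          rw [hXK]; simp only [Matrix.mul_smul, Matrix.smul_mul, Matrix.mul_assoc]
      _ = z • (X * (Y * Y) * X) := by rw [hYK]
  have hR := posSemidef_matAbs J
  refine matAbs_eq_of_mul_self_eq (by simpa [hX.eq] using hR.conjTranspose_mul_mul_same X) ?_
  have hXJX : (X * J * X)ᴴ = X * J * X := by
    simp only [conjTranspose_mul, hX.eq, hJ.eq, Matrix.mul_assoc]
  rw [sq_conj _ hR.1 hRK, matAbs_mul_self, hXJX, hJ.eq,
    sq_conj _ hJ (mul_eq_self_of_matAbs_mul_eq_self hRK)]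

lemma traceNorm_conj_eq (hJ : J.IsHermitian) : traceNorm (X * J * X) = z.re * traceNorm J := by
  have hKR : K * matAbs J = matAbs J := by
    have := congrArg conjTranspose hRK
    rwa [conjTranspose_mul, (posSemidef_matAbs J).1.eq, hK.eq] at this
  have htr : (X * matAbs J * X).trace = z * (traceNorm J : ℂ) := by
    calc (X * matAbs J * X).trace = (X * X * (K * matAbs J * K)).trace := by
          rw [hKR, hRK, trace_mul_comm, ← Matrix.mul_assoc]
      _ = (K * X * X * K * matAbs J).trace := by
          rw [← Matrix.mul_assoc, trace_mul_comm]; simp only [Matrix.mul_assoc]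
      _ = z * (traceNorm J : ℂ) := by
          rw [hXK, Matrix.smul_mul, trace_smul, hKR, trace_matAbs, smul_eq_mul]
  rw [traceNorm, matAbs_conj_eq hK hRK hX hXK hJ, htr, Complex.re_mul_ofReal]

end compression

end matAbs

lemma IsStarProjection.posSemidef {n : Type*} [Fintype n] {P : Matrix n n ℂ}
    (hP : IsStarProjection P) : P.PosSemidef := by
  have h : Pᴴ * P = P := by
    rw [← star_eq_conjTranspose, hP.isSelfAdjoint.star_eq, hP.isIdempotentElem.eq]
  exact h ▸ posSemidef_conjTranspose_mul_self P

lemma matSqrt_eq_sqrt {n : Type*} [Fintype n] [DecidableEq n] {σ : Matrix n n ℂ}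
    (hσ : σ.PosSemidef) : matSqrt σ = hσ.sqrt := by
  rw [matSqrt, dif_pos hσ]

section Kronecker

variable {ι κ : Type*} [Fintype ι] [DecidableEq ι] [Fintype κ]

/-- `Mop S` is `partialTraceFst (matAbs (choi S))` by definition. -/
def partialTraceFst (R : Matrix (ι × κ) (ι × κ) ℂ) : Matrix κ κ ℂ :=
  of fun k l => ∑ b, R (b, k) (b, l)

lemma trace_mul_one_kronecker (R : Matrix (ι × κ) (ι × κ) ℂ) (Q : Matrix κ κ ℂ) :
    (R * ((1 : Matrix ι ι ℂ) ⊗ₖ Q)).trace = (partialTraceFst R * Q).trace := by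
  simp only [trace, diag_apply, mul_apply, partialTraceFst, of_apply, Finset.sum_mul,
    kroneckerMap_apply, one_apply, ite_mul, one_mul, zero_mul, mul_ite, mul_zero,
    Fintype.sum_prod_type, Finset.sum_ite_irrel, Finset.sum_const_zero, Finset.sum_ite_eq',
    Finset.mem_univ, ↓reduceIte]
  exact Finset.sum_comm.trans (Finset.sum_congr rfl fun b _ => Finset.sum_comm)

lemma IsStarProjection.one_kronecker {P : Matrix κ κ ℂ} (hP : IsStarProjection P) :
    IsStarProjection ((1 : Matrix ι ι ℂ) ⊗ₖ P) where
  isIdempotentElem := by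
    rw [IsIdempotentElem, ← mul_kronecker_mul, one_mul, hP.isIdempotentElem.eq]
  isSelfAdjoint := by
    rw [IsSelfAdjoint, star_eq_conjTranspose, conjTranspose_kronecker, conjTranspose_one,
      ← star_eq_conjTranspose, hP.isSelfAdjoint.star_eq]

/-- `Tr (R (1 ⊗ (1 - P))) = Tr (Tr₁ R (1 - P)) = 0`, and for PSD factors a vanishing trace of
the product forces the product itself to vanish. -/
lemma Matrix.PosSemidef.mul_one_kronecker_eq_self [DecidableEq κ]
    {R : Matrix (ι × κ) (ι × κ) ℂ} (hR : R.PosSemidef) {P : Matrix κ κ ℂ}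
    (hP : IsStarProjection P) (h : partialTraceFst R * P = partialTraceFst R) :
    R * ((1 : Matrix ι ι ℂ) ⊗ₖ P) = R := by
  have htr : (R * ((1 : Matrix ι ι ℂ) ⊗ₖ (1 - P))).trace = 0 := by
    rw [trace_mul_one_kronecker, Matrix.mul_sub, mul_one, h, sub_self, trace_zero]
  have hRL := hR.mul_eq_zero_of_trace_mul_eq_zero hP.one_sub.one_kronecker.posSemidef htr
  calc R * ((1 : Matrix ι ι ℂ) ⊗ₖ P)
      = R * ((1 : Matrix ι ι ℂ) ⊗ₖ P) + R * ((1 : Matrix ι ι ℂ) ⊗ₖ (1 - P)) := by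
        rw [hRL, add_zero]
    _ = R := by rw [← Matrix.mul_add, ← kronecker_add, add_sub_cancel, one_kronecker_one, mul_one]

lemma traceNorm_one_kronecker_conj_eq [DecidableEq κ] {J : Matrix (ι × κ) (ι × κ) ℂ}
    (hJ : J.IsHermitian) {P : Matrix κ κ ℂ} (hP : IsStarProjection P)
    (hsupp : partialTraceFst (matAbs J) * P = partialTraceFst (matAbs J))
    {s : Matrix κ κ ℂ} (hs : s.IsHermitian) {z : ℂ} (hPsP : P * (s * s) * P = z • P) :
    traceNorm (((1 : Matrix ι ι ℂ) ⊗ₖ s) * J * ((1 : Matrix ι ι ℂ) ⊗ₖ s))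
      = z.re * traceNorm J := by
  refine traceNorm_conj_eq hP.one_kronecker.posSemidef.1
    ((posSemidef_matAbs J).mul_one_kronecker_eq_self hP hsupp) ?_ ?_ hJ
  · rw [IsHermitian, conjTranspose_kronecker, conjTranspose_one, hs.eq]
  · rw [← mul_kronecker_mul, ← mul_kronecker_mul, ← mul_kronecker_mul, one_mul, one_mul, one_mul,
      Matrix.mul_assoc P s s, hPsP, kronecker_smul]

end Kronecker

section RankOne

variable {n : Type*} [Fintype n] {φ : n → ℂ}

lemma isStarProjection_vecMulVec (hφ : star φ ⬝ᵥ φ = 1) :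
    IsStarProjection (vecMulVec φ (star φ)) where
  isIdempotentElem := by rw [IsIdempotentElem, vecMulVec_mul_vecMulVec, hφ, one_smul]
  isSelfAdjoint := by
    rw [IsSelfAdjoint, star_eq_conjTranspose, conjTranspose_vecMulVec, star_star]

lemma isDensity_vecMulVec [DecidableEq n] (hφ : star φ ⬝ᵥ φ = 1) :
    IsDensity (vecMulVec φ (star φ)) :=
  ⟨posSemidef_vecMulVec_self_star φ, by rw [trace_vecMulVec, dotProduct_comm, hφ]⟩

lemma vecMulVec_mul_mul_vecMulVec (σ : Matrix n n ℂ) :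
    vecMulVec φ (star φ) * σ * vecMulVec φ (star φ)
      = (star φ ⬝ᵥ σ *ᵥ φ) • vecMulVec φ (star φ) := by
  rw [vecMulVec_mul, vecMulVec_mul_vecMulVec, vecMulVec_smul, dotProduct_mulVec]

lemma trace_mul_vecMulVec (σ : Matrix n n ℂ) :
    (σ * vecMulVec φ (star φ)).trace = star φ ⬝ᵥ σ *ᵥ φ := by
  rw [mul_vecMulVec, trace_vecMulVec, dotProduct_comm]

namespace IsDensity

variable [DecidableEq n] {σ : Matrix n n ℂ}

lemma trace_mul_one_sub_vecMulVec (hσ : IsDensity σ) :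
    (σ * (1 - vecMulVec φ (star φ))).trace = 1 - star φ ⬝ᵥ σ *ᵥ φ := by
  rw [Matrix.mul_sub, mul_one, trace_sub, hσ.2, trace_mul_vecMulVec]

lemma re_dotProduct_mulVec_le_one (hσ : IsDensity σ) (hφ : star φ ⬝ᵥ φ = 1) :
    (star φ ⬝ᵥ σ *ᵥ φ).re ≤ 1 := by
  have h := hσ.1.trace_mul_nonneg (isStarProjection_vecMulVec hφ).one_sub.posSemidef
  rw [hσ.trace_mul_one_sub_vecMulVec, sub_nonneg] at h
  exact (Complex.le_def.mp h).1

lemma eq_vecMulVec_of_re_dotProduct_mulVec_eq_one (hσ : IsDensity σ) (hφ : star φ ⬝ᵥ φ = 1)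
    (h : (star φ ⬝ᵥ σ *ᵥ φ).re = 1) : σ = vecMulVec φ (star φ) := by
  have hz : star φ ⬝ᵥ σ *ᵥ φ = 1 :=
    Complex.ext h (Complex.nonneg_iff.mp (hσ.1.dotProduct_mulVec_nonneg φ)).2.symm
  set P := vecMulVec φ (star φ)
  have hP := isStarProjection_vecMulVec hφ
  have hσQ : σ * (1 - P) = 0 := hσ.1.mul_eq_zero_of_trace_mul_eq_zero hP.one_sub.posSemidef
    (by rw [hσ.trace_mul_one_sub_vecMulVec, hz, sub_self])
  have hσP : σ * P = σ := by
    rw [Matrix.mul_sub, mul_one, sub_eq_zero] at hσQ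
    exact hσQ.symm
  have hPσ : P * σ = σ := by
    have := congrArg conjTranspose hσP
    rwa [conjTranspose_mul, hσ.1.1.eq, ← star_eq_conjTranspose, hP.isSelfAdjoint.star_eq] at this
  calc σ = P * σ * P := by rw [hPσ, hσP]
    _ = P := by rw [vecMulVec_mul_mul_vecMulVec, hz, one_smul]

end IsDensity

end RankOne

section Choi

variable {d m : ℕ}

lemma choi_apply (S : Matrix (Fin d) (Fin d) ℂ →ₗ[ℂ] Matrix (Fin m) (Fin m) ℂ)
    (b b' : Fin m) (k k' : Fin d) : choi S (b, k) (b', k') = S (single k k' 1) b b' := by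
  simp [choi, Matrix.sum_apply, single_apply, ite_and]

lemma choi_sub (S T : Matrix (Fin d) (Fin d) ℂ →ₗ[ℂ] Matrix (Fin m) (Fin m) ℂ) :
    choi (S - T) = choi S - choi T := by
  ext ⟨b, k⟩ ⟨b', k'⟩
  simp [choi_apply]

lemma choi_eq_zero_iff {S : Matrix (Fin d) (Fin d) ℂ →ₗ[ℂ] Matrix (Fin m) (Fin m) ℂ} :
    choi S = 0 ↔ S = 0 := by
  refine ⟨fun h => (stdBasis ℂ _ _).ext fun ⟨k, k'⟩ => ?_, fun h => by simp [h, choi]⟩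
  ext b b'
  simpa [stdBasis_eq_single, choi_apply] using congrFun (congrFun h (b, k)) (b', k')

end Choi

/-- if `M(Δ) = ‖J(Δ)‖₁ · φφᴴ` for channels `Φ₁ ≠ Φ₂` and a unit
vector `φ`, then every density matrix `σ` gives value `⟨φ, σφ⟩·‖J(Δ)‖₁`;
consequently `‖Δ‖_⋄ = ‖J(Δ)‖₁ = d·‖Δ‖_ME`, the supremum is attained at
`σ = φφᴴ`, and every other density matrix is strictly suboptimal. -/
theorem stmt4 {d m : ℕ} (hd : 1 ≤ d)
    (Phi1 Phi2 : Matrix (Fin d) (Fin d) ℂ →ₗ[ℂ] Matrix (Fin m) (Fin m) ℂ)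
    (h1 : IsQChannel Phi1) (h2 : IsQChannel Phi2) (hne : Phi1 ≠ Phi2)
    (Delta : Matrix (Fin d) (Fin d) ℂ →ₗ[ℂ] Matrix (Fin m) (Fin m) ℂ)
    (hDelta : Delta = Phi1 - Phi2)
    (phi : Fin d → ℂ) (hphi : star phi ⬝ᵥ phi = 1)
    (hM : Mop Delta = (traceNorm (choi Delta) : ℂ) • Matrix.vecMulVec phi (star phi)) :
    (∀ σ : Matrix (Fin d) (Fin d) ℂ, IsDensity σ →
      traceNorm (((1 : Matrix (Fin m) (Fin m) ℂ) ⊗ₖ matSqrt σ) * choi Delta *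
          ((1 : Matrix (Fin m) (Fin m) ℂ) ⊗ₖ matSqrt σ))
        = (star phi ⬝ᵥ σ *ᵥ phi).re * traceNorm (choi Delta))
    ∧ diamondNorm Delta = traceNorm (choi Delta)
    ∧ diamondNorm Delta = d * MENorm Delta
    ∧ traceNorm (((1 : Matrix (Fin m) (Fin m) ℂ) ⊗ₖ
          matSqrt (Matrix.vecMulVec phi (star phi))) * choi Delta *
        ((1 : Matrix (Fin m) (Fin m) ℂ) ⊗ₖ matSqrt (Matrix.vecMulVec phi (star phi))))
        = diamondNorm Delta
    ∧ ∀ σ : Matrix (Fin d) (Fin d) ℂ, IsDensity σ →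
        σ ≠ Matrix.vecMulVec phi (star phi) →
        traceNorm (((1 : Matrix (Fin m) (Fin m) ℂ) ⊗ₖ matSqrt σ) * choi Delta *
            ((1 : Matrix (Fin m) (Fin m) ℂ) ⊗ₖ matSqrt σ))
          < diamondNorm Delta := by
  set P := vecMulVec phi (star phi)
  have hP : IsStarProjection P := isStarProjection_vecMulVec hphi
  have hJ : (choi Delta).IsHermitian := by rw [hDelta, choi_sub]; exact h1.1.1.sub h2.1.1
  have hN : 0 < traceNorm (choi Delta) :=
    traceNorm_pos (by rwa [Ne, choi_eq_zero_iff, hDelta, sub_eq_zero])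
  have hsupp :
      partialTraceFst (matAbs (choi Delta)) * P = partialTraceFst (matAbs (choi Delta)) :=
    (congrArg (· * P) hM).trans (by rw [smul_mul, hP.isIdempotentElem.eq]; exact hM.symm)
  have value : ∀ σ : Matrix (Fin d) (Fin d) ℂ, IsDensity σ →
      traceNorm (((1 : Matrix (Fin m) (Fin m) ℂ) ⊗ₖ matSqrt σ) * choi Delta *
          ((1 : Matrix (Fin m) (Fin m) ℂ) ⊗ₖ matSqrt σ))
        = (star phi ⬝ᵥ σ *ᵥ phi).re * traceNorm (choi Delta) := fun σ hσ => by
    rw [matSqrt_eq_sqrt hσ.1]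
    exact traceNorm_one_kronecker_conj_eq hJ hP hsupp hσ.1.posSemidef_sqrt.1
      (by rw [hσ.1.sqrt_mul_self, vecMulVec_mul_mul_vecMulVec])
  have hPden : IsDensity P := isDensity_vecMulVec hphi
  have hvalue_P : traceNorm (((1 : Matrix (Fin m) (Fin m) ℂ) ⊗ₖ matSqrt P) * choi Delta *
      ((1 : Matrix (Fin m) (Fin m) ℂ) ⊗ₖ matSqrt P)) = traceNorm (choi Delta) := by
    rw [value P hPden, ← trace_mul_vecMulVec, hP.isIdempotentElem.eq, hPden.2, Complex.one_re,
      one_mul]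
  have : Nonempty {σ : Matrix (Fin d) (Fin d) ℂ // IsDensity σ} := ⟨⟨P, hPden⟩⟩
  have hdiamond : diamondNorm Delta = traceNorm (choi Delta) :=
    ciSup_eq_of_forall_le_of_forall_lt_exists_gt
      (fun σ => (value σ.1 σ.2).trans_le
        (mul_le_of_le_one_left hN.le (σ.2.re_dotProduct_mulVec_le_one hphi)))
      (fun _ hw => ⟨⟨P, hPden⟩, hvalue_P.symm ▸ hw⟩)
  refine ⟨value, hdiamond, ?_, hvalue_P.trans hdiamond.symm, fun σ hσ hσP => ?_⟩
  · rw [hdiamond, MENorm, mul_div_cancel₀ _ (Nat.cast_ne_zero.mpr (by omega))]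
  · rw [value σ hσ, hdiamond]
    exact mul_lt_of_lt_one_left hN ((hσ.re_dotProduct_mulVec_le_one hphi).lt_of_ne
      (mt (hσ.eq_vecMulVec_of_re_dotProduct_mulVec_eq_one hphi) hσP))
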